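/- arXiv:1104.1697 — 3 statements merged into one kernel-verified Lean document; each statement's English description precedes it below -/
import Mathlib

section
/- Let A be an m×n complex matrix of rank r and m₁ ≥ r an integer. Then A{1,2,3} = { Z(AZ)† : Z ∈ C^{n×m₁}, rank(AZ) = r }. -/
/-!
If `X ∈ A{1,2,3}`, then `P = AX` is an orthogonal projection of rank `r = rank A`, so the
spectral theorem factors it as `P = C Cᴴ` with `C` having `m₁ ≥ r` columns. Such a `C` is a
partial isometry, hence `C† = Cᴴ`, and `Z = XC` gives `AZ = PC = C` and
`Z (AZ)† = X C Cᴴ = XAX = X`.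

Conversely, `rank (AZ) = rank A` forces `range (AZ) = range A`, so the idempotent `AZ (AZ)†`,
whose range contains `range (AZ)`, fixes `A`: this is the first Penrose equation for `Z (AZ)†`;
the other two are inherited from `(AZ)†`.
-/

open Matrix

/-- `X` is the Moore-Penrose inverse of `A`: the four Penrose equations hold. -/
def IsMPInv {m n : ℕ} (A : Matrix (Fin m) (Fin n) ℂ) (X : Matrix (Fin n) (Fin m) ℂ) : Prop :=
  A * X * A = A ∧ X * A * X = X ∧ (A * X)ᴴ = A * X ∧ (X * A)ᴴ = X * A

open scoped ComplexOrder

namespace Matrix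

section Field

variable {K : Type*} [Field K] {l m n : Type*} [Fintype m] [Fintype n]

lemma range_mulVecLin_mul_le (A : Matrix l m K) (Z : Matrix m n K) :
    LinearMap.range (A * Z).mulVecLin ≤ LinearMap.range A.mulVecLin := by
  rw [mulVecLin_mul]
  exact LinearMap.range_comp_le_range _ _

lemma range_mulVecLin_mul_eq_of_rank_eq {A : Matrix l m K} {Z : Matrix m n K}
    (h : (A * Z).rank = A.rank) :
    LinearMap.range (A * Z).mulVecLin = LinearMap.range A.mulVecLin :=
  Submodule.eq_of_le_of_finrank_le (range_mulVecLin_mul_le A Z) h.ge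

lemma mul_eq_right_of_range_le {P : Matrix m m K} {N : Matrix m n K} (hP : IsIdempotentElem P)
    (h : LinearMap.range N.mulVecLin ≤ LinearMap.range P.mulVecLin) : P * N = N := by
  refine ext_iff_mulVec.mpr fun v => ?_
  obtain ⟨w, hw⟩ := h ⟨v, rfl⟩
  simp only [mulVecLin_apply] at hw
  rw [← mulVec_mulVec, ← hw, mulVec_mulVec, hP.eq]

lemma mul_mul_eq_of_rank_mul_eq [Fintype l] {A : Matrix l m K} {Z : Matrix m n K}
    {W : Matrix n l K} (hr : (A * Z).rank = A.rank) (hW : A * Z * W * (A * Z) = A * Z) :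
    A * Z * W * A = A := by
  have hP : IsIdempotentElem (A * Z * W) := by
    rw [IsIdempotentElem, ← Matrix.mul_assoc, hW]
  refine mul_eq_right_of_range_le hP ?_
  calc LinearMap.range A.mulVecLin = LinearMap.range (A * Z * W * (A * Z)).mulVecLin := by
        rw [hW, range_mulVecLin_mul_eq_of_rank_eq hr]
    _ ≤ LinearMap.range (A * Z * W).mulVecLin := range_mulVecLin_mul_le _ _

lemma rank_mul_eq_left_of_mul_mul_eq [Fintype l] {A : Matrix l m K} {X : Matrix m l K}
    (h : A * X * A = A) : (A * X).rank = A.rank := by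
  refine le_antisymm (rank_mul_le_left A X) ?_
  calc A.rank = (A * X * A).rank := by rw [h]
    _ ≤ (A * X).rank := rank_mul_le_left _ _

end Field

section RCLike

variable {𝕜 : Type*} [RCLike 𝕜] {m n p : Type*} [Fintype n] [Fintype p]

lemma mul_conjTranspose_mul_self_of_isIdempotentElem [Fintype m] {C : Matrix m n 𝕜}
    (h : IsIdempotentElem (C * Cᴴ)) : C * Cᴴ * C = C := by
  classical
  -- `((CCᴴ - 1) C) ((CCᴴ - 1) C)ᴴ = (CCᴴ - 1) CCᴴ (CCᴴ - 1)ᴴ = 0`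
  have hfactor : C * Cᴴ * C - C = (C * Cᴴ - 1) * C := by rw [Matrix.sub_mul, Matrix.one_mul]
  rw [← sub_eq_zero, ← self_mul_conjTranspose_eq_zero, hfactor, conjTranspose_mul,
    Matrix.mul_assoc, ← Matrix.mul_assoc C, ← Matrix.mul_assoc, Matrix.sub_mul, h.eq,
    Matrix.one_mul, sub_self, Matrix.zero_mul]

lemma exists_mul_conjTranspose_eq_of_card_le (B : Matrix m n 𝕜) (q : n → Prop) [DecidablePred q]
    (hB : ∀ i j, ¬ q j → B i j = 0) (hq : Fintype.card {j // q j} ≤ Fintype.card p) :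
    ∃ C : Matrix m p 𝕜, C * Cᴴ = B * Bᴴ := by
  classical
  obtain ⟨e⟩ := Function.Embedding.nonempty_of_card_le hq
  set Bq := B.submatrix id ((↑) : {j // q j} → n)
  have hBq : Bq * Bqᴴ = B * Bᴴ := by
    ext i i'
    have hzero : ∑ j : {j // ¬ q j}, B i j * Bᴴ j i' = 0 :=
      Finset.sum_eq_zero fun j _ => by rw [hB i j j.2, zero_mul]
    rw [mul_apply, mul_apply, ← Fintype.sum_subtype_add_sum_subtype q, hzero, add_zero]
    rfl
  refine ⟨Bq * (1 : Matrix p p 𝕜).submatrix e id, ?_⟩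
  rw [conjTranspose_mul, conjTranspose_submatrix, conjTranspose_one, Matrix.mul_assoc,
    ← Matrix.mul_assoc _ _ Bqᴴ, ← submatrix_mul _ _ e id e Function.bijective_id, Matrix.mul_one,
    submatrix_one_embedding, Matrix.one_mul, hBq]

/-- `P = (U √D) (U √D)ᴴ` by the spectral theorem, and the columns of `U √D` vanish outside the
`rank P` indices of nonzero eigenvalues. -/
lemma PosSemidef.exists_eq_mul_conjTranspose_of_rank_le [Fintype m] [DecidableEq m]
    {P : Matrix m m 𝕜} (hP : P.PosSemidef) (hr : P.rank ≤ Fintype.card p) :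
    ∃ C : Matrix m p 𝕜, P = C * Cᴴ := by
  set U : Matrix m m 𝕜 := (hP.isHermitian.eigenvectorUnitary : Matrix m m 𝕜)
  set ev := hP.isHermitian.eigenvalues
  set D : Matrix m m 𝕜 := diagonal fun i => (√(ev i) : 𝕜)
  have hD : D * Dᴴ = diagonal (RCLike.ofReal ∘ ev) := by
    rw [diagonal_conjTranspose, diagonal_mul_diagonal]
    congr 1
    funext i
    simp [← RCLike.ofReal_mul, Real.mul_self_sqrt (hP.eigenvalues_nonneg i), ev]
  have hPUD : P = (U * D) * (U * D)ᴴ := by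
    rw [conjTranspose_mul, Matrix.mul_assoc, ← Matrix.mul_assoc D, hD, ← Matrix.mul_assoc,
      ← star_eq_conjTranspose]
    conv_lhs => rw [hP.isHermitian.spectral_theorem, Unitary.conjStarAlgAut_apply]
  obtain ⟨C, hC⟩ := exists_mul_conjTranspose_eq_of_card_le (U * D) (fun j => ev j ≠ 0)
    (fun i j hj => by simp [D, mul_diagonal, not_not.mp hj])
    (hP.isHermitian.rank_eq_card_non_zero_eigs ▸ hr)
  exact ⟨C, hPUD.trans hC.symm⟩

end RCLike

end Matrix

/-- `X ∈ A{1,2,3}`. -/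
def IsInv123 {m n : ℕ} (A : Matrix (Fin m) (Fin n) ℂ) (X : Matrix (Fin n) (Fin m) ℂ) : Prop :=
  A * X * A = A ∧ X * A * X = X ∧ (A * X)ᴴ = A * X

lemma isMPInv_conjTranspose_of_mul_conjTranspose_mul_eq {m n : ℕ} {C : Matrix (Fin m) (Fin n) ℂ}
    (h : C * Cᴴ * C = C) : IsMPInv C Cᴴ := by
  refine ⟨h, ?_, ?_, ?_⟩
  · simpa only [conjTranspose_mul, conjTranspose_conjTranspose, Matrix.mul_assoc]
      using congrArg conjTranspose h
  all_goals rw [conjTranspose_mul, conjTranspose_conjTranspose]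

lemma IsInv123.exists_eq_mul_isMPInv {m n k : ℕ} {A : Matrix (Fin m) (Fin n) ℂ}
    {X : Matrix (Fin n) (Fin m) ℂ} (hX : IsInv123 A X) (hk : A.rank ≤ k) :
    ∃ (Z : Matrix (Fin n) (Fin k) ℂ) (W : Matrix (Fin k) (Fin m) ℂ),
      (A * Z).rank = A.rank ∧ IsMPInv (A * Z) W ∧ X = Z * W := by
  obtain ⟨h1, h2, h3⟩ := hX
  have hP : (A * X)ᴴ * (A * X) = A * X := by rw [h3, ← Matrix.mul_assoc, h1]
  have hPSD : (A * X).PosSemidef := by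
    rw [← hP]
    exact posSemidef_conjTranspose_mul_self _
  obtain ⟨C, hC⟩ := hPSD.exists_eq_mul_conjTranspose_of_rank_le (p := Fin k)
    (by rwa [rank_mul_eq_left_of_mul_mul_eq h1, Fintype.card_fin])
  have hCC : C * Cᴴ * C = C := by
    refine mul_conjTranspose_mul_self_of_isIdempotentElem ?_
    rw [← hC, IsIdempotentElem, ← Matrix.mul_assoc, h1]
  have hAZ : A * (X * C) = C := by rw [← Matrix.mul_assoc, hC, hCC]
  refine ⟨X * C, Cᴴ, ?_, ?_, ?_⟩
  · rw [hAZ, ← rank_self_mul_conjTranspose, ← hC, rank_mul_eq_left_of_mul_mul_eq h1]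
  · rw [hAZ]
    exact isMPInv_conjTranspose_of_mul_conjTranspose_mul_eq hCC
  · rw [Matrix.mul_assoc, ← hC, ← Matrix.mul_assoc, h2]

lemma isInv123_mul_of_isMPInv {m n k : ℕ} {A : Matrix (Fin m) (Fin n) ℂ}
    {Z : Matrix (Fin n) (Fin k) ℂ} {W : Matrix (Fin k) (Fin m) ℂ}
    (hr : (A * Z).rank = A.rank) (hW : IsMPInv (A * Z) W) : IsInv123 A (Z * W) := by
  obtain ⟨h1, h2, h3, -⟩ := hW
  refine ⟨?_, ?_, ?_⟩
  · rw [← Matrix.mul_assoc]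
    exact mul_mul_eq_of_rank_mul_eq hr h1
  · calc Z * W * A * (Z * W) = Z * (W * (A * Z) * W) := by simp only [Matrix.mul_assoc]
      _ = Z * W := by rw [h2]
  · rwa [← Matrix.mul_assoc]

theorem stmt_5 {m n r m₁ : ℕ} (A : Matrix (Fin m) (Fin n) ℂ)
    (hA : A.rank = r) (hm₁ : r ≤ m₁) :
    ∀ X : Matrix (Fin n) (Fin m) ℂ,
      (A * X * A = A ∧ X * A * X = X ∧ (A * X)ᴴ = A * X) ↔
      ∃ (Z : Matrix (Fin n) (Fin m₁) ℂ) (W : Matrix (Fin m₁) (Fin m) ℂ),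
        (A * Z).rank = r ∧ IsMPInv (A * Z) W ∧ X = Z * W := by
  subst hA
  intro X
  constructor
  · intro hX
    exact IsInv123.exists_eq_mul_isMPInv hX hm₁
  · rintro ⟨Z, W, hr, hW, rfl⟩
    exact isInv123_mul_of_isMPInv hr hW
end

section
/- Let A be an m×n complex matrix and Y an n₁×m complex matrix. Then the matrix X = (YA)† Y satisfies XAX = X and (XA)* = XA, i.e., X is always a {2,4}-inverse of A. -/
open Matrix

theorem stmt_16 {m n n₁ : ℕ} (A : Matrix (Fin m) (Fin n) ℂ) (Y : Matrix (Fin n₁) (Fin m) ℂ)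
    (W : Matrix (Fin n) (Fin n₁) ℂ) (hW : IsMPInv (Y * A) W) :
    (W * Y) * A * (W * Y) = W * Y ∧ ((W * Y) * A)ᴴ = (W * Y) * A := by
  obtain ⟨-, hWBW, -, hWB⟩ := hW
  constructor
  · calc W * Y * A * (W * Y) = W * (Y * A) * W * Y := by simp only [Matrix.mul_assoc]
      _ = W * Y := by rw [hWBW]
  · simpa only [Matrix.mul_assoc] using hWB
end

section
/- Let A be an m×n complex matrix and Z an n×m₁ complex matrix. Then the matrix X = Z (AZ)† satisfies XAX = X and (AX)* = AX, i.e., X is always a {2,3}-inverse of A. -/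
open Matrix

theorem Matrix.mul_mul_mul_mul_eq_of_mul_mul_eq {l m n α : Type*} [Fintype l] [Fintype m]
    [Fintype n] [NonUnitalSemiring α] {A : Matrix m n α} {Z : Matrix n l α} {W : Matrix l m α}
    (h : W * (A * Z) * W = W) : Z * W * A * (Z * W) = Z * W := by
  calc Z * W * A * (Z * W) = Z * (W * (A * Z) * W) := by simp only [Matrix.mul_assoc]
    _ = Z * W := by rw [h]

theorem stmt_17 {m n m₁ : ℕ} (A : Matrix (Fin m) (Fin n) ℂ) (Z : Matrix (Fin n) (Fin m₁) ℂ)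
    (W : Matrix (Fin m₁) (Fin m) ℂ) (hW : IsMPInv (A * Z) W) :
    (Z * W) * A * (Z * W) = Z * W ∧ (A * (Z * W))ᴴ = A * (Z * W) := by
  obtain ⟨-, hWAZW, hAZW, -⟩ := hW
  refine ⟨mul_mul_mul_mul_eq_of_mul_mul_eq hWAZW, ?_⟩
  rwa [← Matrix.mul_assoc]
end
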